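/- arXiv:2111.13248 — 2 statements merged into one kernel-verified Lean document; each statement's English description precedes it below -/
import Mathlib

section
/- Let f : F_2^d → F_2 be a Boolean function of d variables and let n ≥ d. Define f* : F_2^n → F_2 by f*(x) = ⊕_{i=1}^{n−d+1} f(x_i, …, x_{i+d−1}) (the CA-XOR construction). Then the algebraic degree of f* equals the algebraic degree of f. -/
/-- The indicator vector (in `F_2^m`) of a finite set of coordinates. -/
def toVec {m : ℕ} (S : Finset (Fin m)) : Fin m → ZMod 2 := fun i => if i ∈ S then 1 else 0

/-- The ANF coefficient of a Boolean function `f` at the monomial with variable set `S`,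
obtained via the Möbius transform. -/
def anf {m : ℕ} (f : (Fin m → ZMod 2) → ZMod 2) (S : Finset (Fin m)) : ZMod 2 :=
  ∑ T ∈ S.powerset, f (toVec T)

/-- The algebraic degree of a Boolean function: the largest size of a monomial occurring
with nonzero coefficient in its algebraic normal form. -/
def degree {m : ℕ} (f : (Fin m → ZMod 2) → ZMod 2) : ℕ :=
  (Finset.univ.filter fun S : Finset (Fin m) => anf f S ≠ 0).sup Finset.card

/-- The CA-XOR construction: `f*(x) = ⊕_{i=1}^{n-d+1} f(x_i, …, x_{i+d-1})`. -/
def caXor {d n : ℕ} (h : d ≤ n) (f : (Fin d → ZMod 2) → ZMod 2) :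
    (Fin n → ZMod 2) → ZMod 2 := fun x =>
  ∑ i : Fin (n - d + 1),
    f (fun j => x ⟨i.val + j.val, by have := i.isLt; have := j.isLt; omega⟩)

/-!
For an embedding `e` of the variables, the ANF of `x ↦ f (x ∘ e)` is that of `f` transported
along `e`; hence every window contributes only monomials of size at most `deg f`. Conversely, take
a monomial of `f` of top degree with least coordinate sum and place it in the first window: any
other window could only produce it from a monomial of the same size with smaller coordinate sum,
so it survives the XOR.
-/

section

variable {d m : ℕ}

lemma toVec_image_comp (e : Fin d ↪ Fin m) (T : Finset (Fin d)) :
    toVec (T.image e) ∘ e = toVec T := by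
  funext j
  simp [toVec, e.injective.mem_finset_image]

lemma toVec_insert_comp (e : Fin d ↪ Fin m) {a : Fin m} (ha : ∀ j, e j ≠ a)
    (T : Finset (Fin m)) : toVec (insert a T) ∘ e = toVec T ∘ e := by
  funext j
  simp [toVec, ha j]

lemma anf_comp_map (e : Fin d ↪ Fin m) (f : (Fin d → ZMod 2) → ZMod 2) (P : Finset (Fin d)) :
    anf (fun x => f (x ∘ e)) (P.map e) = anf f P := by
  unfold anf
  rw [Finset.map_eq_image, Finset.powerset_image,
    Finset.sum_image fun _ _ _ _ hST => Finset.image_injective e.injective hST]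
  simp only [toVec_image_comp]

/-- A monomial containing a variable on which `f ∘ e` does not depend cancels in pairs. -/
lemma anf_comp_eq_zero (e : Fin d ↪ Fin m) (f : (Fin d → ZMod 2) → ZMod 2)
    {S : Finset (Fin m)} (hS : ¬ S ⊆ Finset.univ.map e) :
    anf (fun x => f (x ∘ e)) S = 0 := by
  obtain ⟨a, haS, ha⟩ := Finset.not_subset.mp hS
  have ha' : ∀ j, e j ≠ a := fun j hj => ha (hj ▸ Finset.mem_map_of_mem e (Finset.mem_univ j))
  unfold anf
  rw [← Finset.insert_erase haS, Finset.sum_powerset_insert (Finset.notMem_erase a S)]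
  simp only [toVec_insert_comp e ha']
  exact CharTwo.add_self_eq_zero _

lemma exists_map_eq_of_anf_comp_ne_zero (e : Fin d ↪ Fin m) (f : (Fin d → ZMod 2) → ZMod 2)
    {S : Finset (Fin m)} (hS : anf (fun x => f (x ∘ e)) S ≠ 0) :
    ∃ P, S = P.map e ∧ anf f P ≠ 0 := by
  have hsub : S ⊆ Finset.univ.map e := by_contra fun h => hS (anf_comp_eq_zero e f h)
  obtain ⟨P, -, rfl⟩ := Finset.subset_map_iff.mp hsub
  exact ⟨P, rfl, anf_comp_map e f P ▸ hS⟩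

lemma anf_sum {ι : Type*} (s : Finset ι) (g : ι → (Fin m → ZMod 2) → ZMod 2)
    (S : Finset (Fin m)) : anf (∑ i ∈ s, g i) S = ∑ i ∈ s, anf (g i) S := by
  simp only [anf, Finset.sum_apply]
  exact Finset.sum_comm

lemma card_le_degree {f : (Fin m → ZMod 2) → ZMod 2} {S : Finset (Fin m)} (hS : anf f S ≠ 0) :
    S.card ≤ degree f :=
  Finset.le_sup (Finset.mem_filter.mpr ⟨Finset.mem_univ S, hS⟩)

lemma degree_le_iff {f : (Fin m → ZMod 2) → ZMod 2} {k : ℕ} :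
    degree f ≤ k ↔ ∀ S, anf f S ≠ 0 → S.card ≤ k := by
  simp [degree]

lemma exists_card_eq_degree {f : (Fin m → ZMod 2) → ZMod 2} (hf : degree f ≠ 0) :
    ∃ S, anf f S ≠ 0 ∧ S.card = degree f := by
  have hne : (Finset.univ.filter fun S : Finset (Fin m) => anf f S ≠ 0).Nonempty := by
    by_contra h
    simp [degree, Finset.not_nonempty_iff_eq_empty.mp h] at hf
  obtain ⟨S, hS, hcard⟩ := Finset.exists_mem_eq_sup _ hne Finset.card
  exact ⟨S, (Finset.mem_filter.mp hS).2, hcard.symm⟩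

lemma degree_sum_le {ι : Type*} (s : Finset ι) (g : ι → (Fin m → ZMod 2) → ZMod 2) :
    degree (∑ i ∈ s, g i) ≤ s.sup fun i => degree (g i) := by
  refine degree_le_iff.mpr fun S hS => ?_
  rw [anf_sum] at hS
  obtain ⟨i, hi, hgi⟩ := Finset.exists_ne_zero_of_sum_ne_zero hS
  exact (card_le_degree hgi).trans (Finset.le_sup (f := fun i => degree (g i)) hi)

lemma degree_comp_le (e : Fin d ↪ Fin m) (f : (Fin d → ZMod 2) → ZMod 2) :
    degree (fun x => f (x ∘ e)) ≤ degree f := by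
  refine degree_le_iff.mpr fun S hS => ?_
  obtain ⟨P, rfl, hP⟩ := exists_map_eq_of_anf_comp_ne_zero e f hS
  rw [Finset.card_map]
  exact card_le_degree hP

end

namespace CAXor

variable {d n : ℕ}

def window (h : d ≤ n) (i : Fin (n - d + 1)) : Fin d ↪ Fin n where
  toFun j := ⟨i.val + j.val, by have := i.isLt; have := j.isLt; omega⟩
  inj' a b hab := Fin.ext (Nat.add_left_cancel (congrArg Fin.val hab))

@[simp]
lemma val_window_apply (h : d ≤ n) (i : Fin (n - d + 1)) (j : Fin d) :
    (window h i j : ℕ) = i + j :=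
  rfl

lemma caXor_eq_sum (h : d ≤ n) (f : (Fin d → ZMod 2) → ZMod 2) :
    caXor h f = ∑ i, fun x => f (x ∘ window h i) := by
  funext x
  simp only [Finset.sum_apply]
  rfl

lemma sum_val_map_window (h : d ≤ n) (i : Fin (n - d + 1)) (P : Finset (Fin d)) :
    ∑ a ∈ P.map (window h i), (a : ℕ) = i * P.card + ∑ j ∈ P, (j : ℕ) := by
  simp [Finset.sum_add_distrib, mul_comm]

lemma degree_caXor_le (h : d ≤ n) (f : (Fin d → ZMod 2) → ZMod 2) :
    degree (caXor h f) ≤ degree f := by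
  rw [caXor_eq_sum]
  exact (degree_sum_le _ _).trans (Finset.sup_le fun i _ => degree_comp_le _ f)

/-- A contribution from window `i > 0` would come from a monomial of the same size as `S₀` whose
coordinate sum is smaller by `i * S₀.card`. -/
lemma anf_caXor_map_window_zero (h : d ≤ n) (f : (Fin d → ZMod 2) → ZMod 2)
    {S₀ : Finset (Fin d)} (hS₀ : S₀.Nonempty)
    (hmin : ∀ P, anf f P ≠ 0 → P.card = S₀.card → ∑ j ∈ S₀, (j : ℕ) ≤ ∑ j ∈ P, (j : ℕ)) :
    anf (caXor h f) (S₀.map (window h 0)) = anf f S₀ := by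
  rw [caXor_eq_sum, anf_sum, Finset.sum_eq_single_of_mem 0 (Finset.mem_univ _), anf_comp_map]
  intro i _ hi
  by_contra hne
  obtain ⟨P, hP, hfP⟩ := exists_map_eq_of_anf_comp_ne_zero _ f hne
  have hcard : P.card = S₀.card := by
    simpa only [Finset.card_map] using congrArg Finset.card hP.symm
  have hsum := congrArg (fun S : Finset (Fin n) => ∑ a ∈ S, (a : ℕ)) hP
  simp only [sum_val_map_window, Fin.val_zero, zero_mul, zero_add, hcard] at hsum
  have hi : 0 < (i : ℕ) * S₀.card :=
    Nat.mul_pos (Nat.pos_of_ne_zero (Fin.val_ne_of_ne hi)) hS₀.card_pos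
  have := hmin P hfP hcard
  omega

end CAXor

open CAXor in
/-- The CA-XOR construction preserves the algebraic degree of the local rule. -/
theorem stmt0 {d n : ℕ} (h : d ≤ n) (f : (Fin d → ZMod 2) → ZMod 2) :
    degree (caXor h f) = degree f := by
  refine le_antisymm (degree_caXor_le h f) ?_
  obtain hf | hf := eq_or_ne (degree f) 0
  · exact hf ▸ Nat.zero_le _
  obtain ⟨S₁, hS₁, hcard₁⟩ := exists_card_eq_degree hf
  obtain ⟨S₀, hS₀, hmin⟩ := Finset.exists_min_image
    (Finset.univ.filter fun S : Finset (Fin d) => anf f S ≠ 0 ∧ S.card = degree f)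
    (fun S => ∑ j ∈ S, (j : ℕ)) ⟨S₁, by simp [hS₁, hcard₁]⟩
  simp only [Finset.mem_filter, Finset.mem_univ, true_and] at hS₀ hmin
  have hS₀ne : S₀.Nonempty := Finset.card_pos.mp (hS₀.2 ▸ Nat.pos_of_ne_zero hf)
  have hanf := anf_caXor_map_window_zero h f hS₀ne fun P hP hcard =>
    hmin P ⟨hP, hcard.trans hS₀.2⟩
  calc degree f = (S₀.map (window h 0)).card := by rw [Finset.card_map, hS₀.2]
    _ ≤ degree (caXor h f) := card_le_degree (hanf ▸ hS₀.1)
end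

section
/- Let f : F_2^d → F_2 have algebraic degree exactly t ≥ 1, let n > d, and let f* : F_2^n → F_2 be given by the CA-XOR construction f*(x) = ⊕_{i=1}^{n−d+1} f(x_i, …, x_{i+d−1}). Let I_min ⊆ {1,…,d} be the lexicographically minimal monomial of degree t appearing with nonzero coefficient in the ANF of f. Then the monomial with variable index set I_min appears with coefficient 1 in the ANF of f*. -/
/-- Lexicographic order on subsets (of equal cardinality): `I` strictly precedes `J` when
at the first sorted position where they differ, `I` has the smaller element.  Equivalently,
the minimum element of the symmetric difference lies in `I`: there is `k ∈ I \ J` smaller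
than every element of `J \ I`. -/
def lexLt {m : ℕ} (I J : Finset (Fin m)) : Prop :=
  ∃ k ∈ I \ J, ∀ l ∈ J \ I, k < l

lemma lexLt_asymm {m : ℕ} {I J : Finset (Fin m)} (h1 : lexLt I J) (h2 : lexLt J I) : False := by
  obtain ⟨k, hk, hkl⟩ := h1
  obtain ⟨k', hk', hk'l⟩ := h2
  exact absurd (hkl k' hk') (not_lt.mpr (hk'l k hk).le)

/-- If `f` has algebraic degree exactly `t ≥ 1` and `I` is the lexicographically minimal
degree-`t` monomial in the ANF of `f`, then for `n > d` the monomial `I` (viewed inside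
`{1, …, n}`) occurs with coefficient `1` in the ANF of the CA-XOR extension `f*`. -/
theorem stmt18 {d n t : ℕ} (ht : 1 ≤ t) (hdn : d < n)
    (f : (Fin d → ZMod 2) → ZMod 2) (hdeg : degree f = t)
    (I : Finset (Fin d)) (hI : anf f I ≠ 0) (hIcard : I.card = t)
    (hmin : ∀ J : Finset (Fin d), anf f J ≠ 0 → J.card = t → I = J ∨ lexLt I J) :
    anf (caXor hdn.le f) (I.map (Fin.castLEEmb hdn.le)) = 1 := by
  classical
  have hd0 : 0 < d := by
    by_contra h
    have hIe : I = ∅ := Finset.eq_empty_of_forall_notMem (fun a _ => absurd a.isLt (by omega))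
    rw [hIe] at hIcard; simp at hIcard; omega
  have hin : ∀ i : Fin (n - d + 1), i.val ≤ n - d := fun i => by have := i.isLt; omega
  set sd : Fin (n - d + 1) → Fin d → Fin d :=
    fun i a => ⟨(a.val - i.val) % d, Nat.mod_lt _ hd0⟩ with hsd
  set J : Fin (n - d + 1) → Finset (Fin d) := fun i => I.image (sd i) with hJdef
  set I' : Finset (Fin n) := I.map (Fin.castLEEmb hdn.le) with hI'
  have hmemI' : ∀ a : Fin n, a ∈ I' ↔ ∃ b ∈ I, b.val = a.val := by
    intro a
    simp only [hI', Finset.mem_map, Fin.castLEEmb_apply]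
    constructor
    · rintro ⟨b, hb, rfl⟩; exact ⟨b, hb, rfl⟩
    · rintro ⟨b, hb, hval⟩; exact ⟨b, hb, Fin.ext hval⟩
  have expand : anf (caXor hdn.le f) I'
      = ∑ i : Fin (n - d + 1), ∑ T ∈ I'.powerset,
          f (fun j => toVec T ⟨i.val + j.val, by have := hin i; have := j.isLt; omega⟩) := by
    unfold anf caXor
    rw [Finset.sum_comm]
  -- Lemma A : if some element of I lies left of the window, the term vanishes
  have hA : ∀ i : Fin (n - d + 1), (∃ a ∈ I, a.val < i.val) →
      (∑ T ∈ I'.powerset,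
        f (fun j => toVec T ⟨i.val + j.val, by have := hin i; have := j.isLt; omega⟩)) = 0 := by
    intro i ⟨a, haI, hai⟩
    set a' : Fin n := ⟨a.val, lt_trans a.isLt hdn⟩ with ha'
    have ha'I' : a' ∈ I' := (hmemI' a').mpr ⟨a, haI, rfl⟩
    refine Finset.sum_involution
      (fun T _ => if a' ∈ T then T.erase a' else insert a' T) ?_ ?_ ?_ ?_
    · intro T hT
      have hval : (f fun j => toVec (if a' ∈ T then T.erase a' else insert a' T)
            ⟨i.val + j.val, by have := hin i; have := j.isLt; omega⟩)
          = (f fun j => toVec T ⟨i.val + j.val, by have := hin i; have := j.isLt; omega⟩) := by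
        congr 1
        funext j
        have hne : (⟨i.val + j.val, by have := hin i; have := j.isLt; omega⟩ : Fin n) ≠ a' := by
          intro h
          have := congrArg Fin.val h
          simp only [ha'] at this
          omega
        unfold toVec
        by_cases hc : a' ∈ T <;> simp [hc, hne]
      rw [hval]
      exact CharTwo.add_self_eq_zero _
    · intro T hT _
      by_cases hc : a' ∈ T <;> simp [hc]
    · intro T hT
      have hTs := Finset.mem_powerset.mp hT
      by_cases hc : a' ∈ T <;> simp [hc, Finset.mem_powerset]
      · exact (Finset.erase_subset a' T).trans hTs
      · exact Finset.insert_subset ha'I' hTs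
    · intro T hT
      by_cases hc : a' ∈ T <;> simp [hc]
  -- Lemma B : if the window covers I, the term is the ANF coefficient of the shifted set
  have hB : ∀ i : Fin (n - d + 1), (∀ a ∈ I, i.val ≤ a.val) →
      (∑ T ∈ I'.powerset,
        f (fun j => toVec T ⟨i.val + j.val, by have := hin i; have := j.isLt; omega⟩))
        = anf f (J i) := by
    intro i hi
    unfold anf
    have hup : ∀ b : Fin d, i.val + b.val < n := by
      intro b; have := hin i; have := b.isLt; omega
    refine Finset.sum_nbij'
      (fun T : Finset (Fin n) => T.image (fun a => (⟨(a.val - i.val) % d, Nat.mod_lt _ hd0⟩ : Fin d)))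
      (fun T0 : Finset (Fin d) => T0.image (fun b => (⟨i.val + b.val, hup b⟩ : Fin n)))
      ?_ ?_ ?_ ?_ ?_
    · -- maps into powerset of J i
      intro T hT
      rw [Finset.mem_powerset] at hT ⊢
      intro x hx
      obtain ⟨a, haT, rfl⟩ := Finset.mem_image.mp hx
      obtain ⟨b, hbI, hba⟩ := (hmemI' a).mp (hT haT)
      refine Finset.mem_image.mpr ⟨b, hbI, ?_⟩
      simp only [hsd]
      exact Fin.ext (by simp [hba])
    · -- inverse maps into powerset of I'
      intro T0 hT0
      rw [Finset.mem_powerset] at hT0 ⊢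
      intro x hx
      obtain ⟨b, hbT0, rfl⟩ := Finset.mem_image.mp hx
      obtain ⟨c, hcI, hcb⟩ := Finset.mem_image.mp (hT0 hbT0)
      refine (hmemI' _).mpr ⟨c, hcI, ?_⟩
      have hc1 : i.val ≤ c.val := hi c hcI
      have hc2 : c.val < d := c.isLt
      have : (sd i c).val = (c.val - i.val) % d := rfl
      have hbval : b.val = c.val - i.val := by
        rw [← hcb, this, Nat.mod_eq_of_lt (by omega)]
      simp [hbval]; omega
    · -- left inverse
      intro T hT
      have hTs := Finset.mem_powerset.mp hT
      beta_reduce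
      rw [Finset.image_image]
      refine Finset.image_congr ?_ |>.trans Finset.image_id
      intro a haT
      obtain ⟨b, hbI, hba⟩ := (hmemI' a).mp (hTs haT)
      have h1 : i.val ≤ a.val := hba ▸ hi b hbI
      have h2 : a.val < d := hba ▸ b.isLt
      simp only [Function.comp_apply, id_eq]
      exact Fin.ext (by simp [Nat.mod_eq_of_lt (show a.val - i.val < d by omega)]; omega)
    · -- right inverse
      intro T0 hT0
      beta_reduce
      rw [Finset.image_image]
      refine Finset.image_congr ?_ |>.trans Finset.image_id
      intro b _
      simp only [Function.comp_apply, id_eq]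
      exact Fin.ext (by simp [Nat.mod_eq_of_lt b.isLt])
    · -- values agree
      intro T hT
      have hTs := Finset.mem_powerset.mp hT
      congr 1
      funext j
      unfold toVec
      congr 1
      simp only [eq_iff_iff, Finset.mem_image]
      constructor
      · intro hmem
        exact ⟨_, hmem, Fin.ext (by simp [Nat.mod_eq_of_lt j.isLt])⟩
      · rintro ⟨a, haT, rfl⟩
        obtain ⟨b, hbI, hba⟩ := (hmemI' a).mp (hTs haT)
        have h1 : i.val ≤ a.val := hba ▸ hi b hbI
        have h2 : a.val < d := hba ▸ b.isLt
        convert haT using 1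
        exact Fin.ext (by simp [Nat.mod_eq_of_lt (show a.val - i.val < d by omega)]; omega)
  -- Lemma C : for a nontrivial covering shift, the coefficient vanishes
  have hC : ∀ i : Fin (n - d + 1), (∀ a ∈ I, i.val ≤ a.val) → i.val ≠ 0 →
      anf f (J i) = 0 := by
    intro i hi hi0
    by_contra hne
    have hvals : ∀ a ∈ I, (sd i a).val = a.val - i.val := by
      intro a haI
      have := hi a haI
      have := a.isLt
      exact Nat.mod_eq_of_lt (by omega)
    have hcard : (J i).card = t := by
      rw [hJdef]
      rw [Finset.card_image_of_injOn, hIcard]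
      intro a haI b hbI hab
      have := congrArg Fin.val hab
      rw [hvals a haI, hvals b hbI] at this
      exact Fin.ext (by have := hi a haI; have := hi b hbI; omega)
    rcases hmin (J i) hne hcard with heq | hlex
    · -- I = J i impossible
      have hIne : I.Nonempty := Finset.card_pos.mp (by omega)
      set a0 := I.min' hIne with ha0
      have ha0I : a0 ∈ I := I.min'_mem hIne
      have hsdI : sd i a0 ∈ I := by
        rw [heq, hJdef]; exact Finset.mem_image_of_mem _ ha0I
      have := I.min'_le _ hsdI
      rw [← ha0, Fin.le_def, hvals a0 ha0I] at this
      have := hi a0 ha0I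
      omega
    · -- lexLt I (J i) contradicts minimality by the descent argument
      obtain ⟨k, hk, -⟩ := id hlex
      have hΔne : ((J i \ I) ∪ (I \ J i)).Nonempty :=
        ⟨k, Finset.mem_union_right _ hk⟩
      set Δ := (J i \ I) ∪ (I \ J i) with hΔ
      set m := Δ.min' hΔne with hm
      have hmΔ : m ∈ Δ := Δ.min'_mem hΔne
      -- descent: no element of I is ≤ m
      have descend : ∀ N : ℕ, ∀ x : Fin d, x ∈ I → x.val ≤ N → x.val ≤ m.val → False := by
        intro N
        induction N with
        | zero =>
          intro x hx hN _
          have := hi x hx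
          omega
        | succ N ih =>
          intro x hx hN hxm
          have hxi : i.val ≤ x.val := hi x hx
          have hyJ : sd i x ∈ J i := by rw [hJdef]; exact Finset.mem_image_of_mem _ hx
          have hyval : (sd i x).val = x.val - i.val := hvals x hx
          have hylt : (sd i x).val < m.val := by omega
          have hyI : sd i x ∈ I := by
            by_contra hyI
            have : sd i x ∈ Δ := Finset.mem_union_left _ (Finset.mem_sdiff.mpr ⟨hyJ, hyI⟩)
            have := Δ.min'_le _ this
            rw [← hm, Fin.le_def] at this
            omega
          exact ih (sd i x) hyI (by omega) (by omega)
      have hmnotI : m ∉ I := fun hmI => descend m.val m hmI le_rfl le_rfl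
      have hmJI : m ∈ J i \ I := by
        rcases Finset.mem_union.mp hmΔ with h | h
        · exact h
        · exact absurd (Finset.mem_sdiff.mp h).1 hmnotI
      refine lexLt_asymm hlex ⟨m, hmJI, ?_⟩
      intro l hl
      have hlI : l ∈ I := (Finset.mem_sdiff.mp hl).1
      rw [Fin.lt_def]
      by_contra hc
      exact descend l.val l hlI le_rfl (by omega)
  -- assemble
  rw [expand]
  rw [Finset.sum_eq_single (0 : Fin (n - d + 1))]
  · rw [hB 0 (fun a _ => Nat.zero_le _)]
    have hJ0 : J 0 = I := by
      rw [hJdef]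
      refine Finset.image_congr ?_ |>.trans Finset.image_id
      intro a _
      exact Fin.ext (by simp [hsd, Nat.mod_eq_of_lt a.isLt])
    rw [hJ0]
    have h2 : ∀ x : ZMod 2, x ≠ 0 → x = 1 := by decide
    exact h2 _ hI
  · intro i _ hi0
    have hi0' : i.val ≠ 0 := fun h => hi0 (Fin.ext (by simp [h]))
    by_cases hc : ∀ a ∈ I, i.val ≤ a.val
    · rw [hB i hc]; exact hC i hc hi0'
    · push_neg at hc
      exact hA i hc
  · intro h
    exact absurd (Finset.mem_univ 0) h
end
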